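/- Let Λ be a normal greedoid over a finite alphabet Σ with an aligned polymatroid representation ρ, and let α ∈ Λ be a feasible word. Then for every x ∈ Σ with x ∉ κ(α̃), one has ρ(α̃ ∪ {x}) ≥ ρ(α̃) + 1. -/

import Mathlib

namespace PaperPG

def letters {A : Type*} (w : List A) : Set A := {x | x ∈ w}

/-- A greedoid over alphabet `A`: a nonempty simple hereditary language with exchange. -/
structure Greedoid (A : Type*) where
  lang : Set (List A)
  lang_nonempty : lang.Nonempty
  simple : ∀ w ∈ lang, w.Nodup
  hereditary : ∀ α β : List A, α ++ β ∈ lang → α ∈ lang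
  exchange : ∀ α ∈ lang, ∀ β ∈ lang, β.length < α.length →
      ∃ x ∈ letters α, β ++ [x] ∈ lang

/-- Kernel of a flat: union of the letter sets of its members. -/
def flatKernel {A : Type*} (F : Set (List A)) : Set A := {y : A | ∃ β ∈ F, y ∈ β}

namespace Greedoid

variable {A : Type*} (G : Greedoid A)

/-- `X` is feasible if it is the set of letters of a feasible word. -/
def Feasible (X : Set A) : Prop := ∃ α ∈ G.lang, letters α = X

/-- The interval property. -/
def IntervalProperty : Prop :=
  ∀ X Y Z : Set A, G.Feasible X → G.Feasible Y → G.Feasible Z →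
    X ⊆ Y → Y ⊆ Z → ∀ x : A, x ∉ Z →
      G.Feasible (X ∪ {x}) → G.Feasible (Z ∪ {x}) → G.Feasible (Y ∪ {x})

/-- A loop is a letter occurring in no feasible word. -/
def IsLoop (x : A) : Prop := ∀ α ∈ G.lang, x ∉ α

/-- A greedoid is normal if it has no loops. -/
def Normal : Prop := ∀ x : A, ¬ G.IsLoop x

/-- Greedoid rank: maximum length of a feasible word with letters inside `X`. -/
noncomputable def rank (X : Set A) : ℕ :=
  sSup {n : ℕ | ∃ α ∈ G.lang, letters α ⊆ X ∧ α.length = n}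

/-- Greedoid span. -/
def spanR (X : Set A) : Set A := {y : A | G.rank (X ∪ {y}) = G.rank X}

/-- Kernel of a set. -/
def kernel (X : Set A) : Set A :=
  {y : A | ∃ β ∈ G.lang, letters β ⊆ G.spanR X ∧ y ∈ β}

/-- Continuations of a word. -/
def cont (α : List A) : Set A := {x : A | α ++ [x] ∈ G.lang}

/-- The flat (equivalence class under equal continuations) of a word. -/
def flatOf (α : List A) : Set (List A) := {β ∈ G.lang | G.cont β = G.cont α}

def IsFlat (F : Set (List A)) : Prop := ∃ α ∈ G.lang, F = G.flatOf α


/-- Order on flats: `[α] ⊑ [β]` iff some `αγ ∈ Λ` with `αγ ∼ β`. -/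
def flatLE (F F' : Set (List A)) : Prop :=
  ∃ α ∈ F, ∃ γ : List A, α ++ γ ∈ G.lang ∧ (α ++ γ) ∈ F'

def flatLT (F F' : Set (List A)) : Prop := G.flatLE F F' ∧ F ≠ F'

/-- Covering relation on flats. -/
def flatCovBy (F F' : Set (List A)) : Prop :=
  G.flatLT F F' ∧ ∀ E : Set (List A), G.IsFlat E → G.flatLT F E → G.flatLT E F' → False

/-- `M` is a meet of the flats `F` and `F'`. -/
def IsMeet (M F F' : Set (List A)) : Prop :=
  G.IsFlat M ∧ G.flatLE M F ∧ G.flatLE M F' ∧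
    ∀ E : Set (List A), G.IsFlat E → G.flatLE E F → G.flatLE E F' → G.flatLE E M

/-- A basic word: one of maximum length. -/
def Basic (w : List A) : Prop := w ∈ G.lang ∧ ∀ v ∈ G.lang, v.length ≤ w.length

/-- Optimism: every non-loop is a continuation of some prefix of every basic word. -/
def Optimistic : Prop :=
  ∀ y : A, ¬ G.IsLoop y → ∀ w : List A, G.Basic w →
    ∃ i ≤ w.length, y ∈ G.cont (w.take i)

/-- The greatest representation `ρ♮`. -/
noncomputable def rhoNat (X : Set A) : ℕ :=
  sInf {n : ℕ | ∃ α ∈ G.lang, X ⊆ G.kernel (letters α) ∧ α.length = n}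

end Greedoid

/-- A polymatroid rank function: normalized, monotone, submodular. -/
def IsPolymatroid {A : Type*} (ρ : Set A → ℝ) : Prop :=
  ρ ∅ = 0 ∧ (∀ X Y : Set A, X ⊆ Y → ρ X ≤ ρ Y) ∧
    ∀ X Y : Set A, ρ (X ∪ Y) + ρ (X ∩ Y) ≤ ρ X + ρ Y

/-- `ρ` represents `G`: the language consists exactly of the simple words each of whose
prefixes of length `i` has rank `i`. -/
def Represents {A : Type*} (ρ : Set A → ℝ) (G : Greedoid A) : Prop :=
  ∀ w : List A, w ∈ G.lang ↔
    (w.Nodup ∧ ∀ i : ℕ, i < w.length → ρ (letters (w.take (i + 1))) = (i + 1 : ℝ))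

/-- Polymatroid span. -/
def spanP {A : Type*} (ρ : Set A → ℝ) (X : Set A) : Set A :=
  {y : A | ρ (X ∪ {y}) = ρ X}

/-- Closed sets of a polymatroid. -/
def ClosedP {A : Type*} (ρ : Set A → ℝ) (X : Set A) : Prop := spanP ρ X = X

/-- Covering relation on the closed sets of `ρ`, ordered by inclusion. -/
def closedCovBy {A : Type*} (ρ : Set A → ℝ) (S S' : Set A) : Prop :=
  ClosedP ρ S ∧ ClosedP ρ S' ∧ S ⊂ S' ∧
    ∀ T : Set A, ClosedP ρ T → S ⊂ T → T ⊂ S' → False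

/-- Alignment of a representation. -/
def Aligned {A : Type*} (G : Greedoid A) (ρ : Set A → ℝ) : Prop :=
  ∃ φ : Set (List A) → Set A,
    (∀ F, G.IsFlat F → ClosedP ρ (φ F)) ∧
    (∀ F F', G.IsFlat F → G.IsFlat F' → G.flatLE F F' → φ F ⊆ φ F') ∧
    (∀ α ∈ G.lang, ρ (letters α) = ρ (φ (G.flatOf α))) ∧
    (∀ α ∈ G.lang, letters α ⊆ φ (G.flatOf α)) ∧
    (∀ F F', G.IsFlat F → G.IsFlat F' → G.flatCovBy F F' → closedCovBy ρ (φ F) (φ F'))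

/-- The maps `φ* : F ↦ σ_ρ(κ(F))` and `φ_* : S ↦ κ⁻¹(S)` are well-defined order-preserving
maps between the flats of `G` and the closed sets of `ρ` forming a Galois connection in
which `φ*` preserves the covering relation of the flats. -/
def GaloisPair {A : Type*} (G : Greedoid A) (ρ : Set A → ℝ) : Prop :=
  (∀ F, G.IsFlat F → ClosedP ρ (spanP ρ (flatKernel F))) ∧
  (∀ F F', G.IsFlat F → G.IsFlat F' → G.flatLE F F' →
      spanP ρ (flatKernel F) ⊆ spanP ρ (flatKernel F')) ∧
  (∀ S, ClosedP ρ S → ∃! F, G.IsFlat F ∧ flatKernel F = G.kernel S) ∧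
  (∀ S S', ClosedP ρ S → ClosedP ρ S' → S ⊆ S' →
      ∀ F F', G.IsFlat F → flatKernel F = G.kernel S →
        G.IsFlat F' → flatKernel F' = G.kernel S' → G.flatLE F F') ∧
  (∀ F, G.IsFlat F → ∀ S, ClosedP ρ S → ∀ F', G.IsFlat F' → flatKernel F' = G.kernel S →
      (spanP ρ (flatKernel F) ⊆ S ↔ G.flatLE F F')) ∧
  (∀ F F', G.IsFlat F → G.IsFlat F' → G.flatCovBy F F' →
      closedCovBy ρ (spanP ρ (flatKernel F)) (spanP ρ (flatKernel F')))


/-! ### Auxiliary lemmas -/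

section Aux

variable {A : Type*}

lemma mem_letters {w : List A} {a : A} : a ∈ letters w ↔ a ∈ w := Iff.rfl

lemma letters_append (u v : List A) : letters (u ++ v) = letters u ∪ letters v := by
  ext a; simp [letters]

lemma letters_single (x : A) : letters [x] = {x} := by
  ext a; simp [letters]

lemma letters_nil : letters ([] : List A) = ∅ := by
  ext a; simp [letters]

lemma nil_mem (G : Greedoid A) : [] ∈ G.lang := by
  obtain ⟨w, hw⟩ := G.lang_nonempty
  exact G.hereditary [] w hw

lemma take_mem (G : Greedoid A) {w : List A} (h : w ∈ G.lang) (n : ℕ) :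
    w.take n ∈ G.lang := by
  apply G.hereditary (w.take n) (w.drop n)
  rw [List.take_append_drop]; exact h

lemma cont_notin (G : Greedoid A) {w : List A} {x : A} (h : w ++ [x] ∈ G.lang) :
    x ∉ letters w := by
  have hnd := G.simple _ h
  rw [List.nodup_append] at hnd
  intro hx
  exact hnd.2.2 _ (mem_letters.mp hx) _ (by simp) rfl

lemma length_eq_of_cont_eq (G : Greedoid A) {b c : List A} (hb : b ∈ G.lang)
    (hc : c ∈ G.lang) (h : G.cont b = G.cont c) : b.length = c.length := by
  by_contra hne
  rcases Nat.lt_or_ge b.length c.length with hlt | hge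
  · obtain ⟨y, hy, hby⟩ := G.exchange c hc b hb hlt
    have h2 : y ∈ G.cont b := hby
    rw [h] at h2
    exact cont_notin G h2 hy
  · have hlt2 : c.length < b.length := by omega
    obtain ⟨y, hy, hcy⟩ := G.exchange b hb c hc hlt2
    have h2 : y ∈ G.cont c := hcy
    rw [← h] at h2
    exact cont_notin G h2 hy

lemma max_ext (G : Greedoid A) [Fintype A] {α : List A} (hα : α ∈ G.lang) (Z : Set A)
    (hZ : letters α ⊆ Z) :
    ∃ θ, α ++ θ ∈ G.lang ∧ letters (α ++ θ) ⊆ Z ∧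
      ∀ y ∈ Z, (α ++ θ) ++ [y] ∉ G.lang := by
  suffices h : ∀ n (α : List A), α ∈ G.lang → letters α ⊆ Z →
      Fintype.card A ≤ α.length + n →
      ∃ θ, α ++ θ ∈ G.lang ∧ letters (α ++ θ) ⊆ Z ∧
        ∀ y ∈ Z, (α ++ θ) ++ [y] ∉ G.lang from
    h (Fintype.card A) α hα hZ (by omega)
  intro n
  induction n with
  | zero =>
    intro α hα hZ hcard
    refine ⟨[], by simpa using hα, by simpa using hZ, ?_⟩
    intro y _ hmem
    have hlen := List.Nodup.length_le_card (G.simple _ hmem)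
    simp at hlen
    omega
  | succ n ih =>
    intro α hα hZ hcard
    by_cases hex : ∃ y ∈ Z, α ++ [y] ∈ G.lang
    · obtain ⟨y, hyZ, hy⟩ := hex
      obtain ⟨θ, h1, h2, h3⟩ := ih (α ++ [y]) hy
        (by rw [letters_append, letters_single]
            exact Set.union_subset hZ (by simpa using hyZ))
        (by simp; omega)
      refine ⟨[y] ++ θ, ?_, ?_, ?_⟩
      · rw [← List.append_assoc]; exact h1
      · rw [← List.append_assoc]; exact h2
      · rw [← List.append_assoc]; exact h3
    · push_neg at hex
      exact ⟨[], by simpa using hα, by simpa using hZ, by simpa using hex⟩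

end Aux

section AuxRep

variable {A : Type*} {G : Greedoid A} {ρ : Set A → ℝ}

lemma rho_word (hpm : IsPolymatroid ρ) (hrep : Represents ρ G) {w : List A}
    (hw : w ∈ G.lang) : ρ (letters w) = (w.length : ℝ) := by
  rcases eq_or_ne w [] with rfl | hne
  · rw [letters_nil]; simpa using hpm.1
  · have hl : 0 < w.length := List.length_pos_iff.mpr hne
    have h := ((hrep w).mp hw).2 (w.length - 1) (by omega)
    rw [show w.length - 1 + 1 = w.length from by omega, List.take_length] at h
    rw [h]
    push_cast [Nat.cast_sub (by omega : 1 ≤ w.length)]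
    ring

lemma rho_take (hpm : IsPolymatroid ρ) (hrep : Represents ρ G) {w : List A}
    (hw : w ∈ G.lang) {j : ℕ} (hj : j ≤ w.length) :
    ρ (letters (w.take j)) = (j : ℝ) := by
  rw [rho_word hpm hrep (take_mem G hw j)]
  simp [List.length_take, min_eq_left hj]

lemma mem_of_rho (hrep : Represents ρ G) {v : List A} {x : A} (hv : v ∈ G.lang)
    (hx : x ∉ letters v) (hr : ρ (letters v ∪ {x}) = (v.length : ℝ) + 1) :
    v ++ [x] ∈ G.lang := by
  rw [hrep]
  constructor
  · refine List.Nodup.append (G.simple v hv) (List.nodup_singleton x) ?_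
    intro a ha hax
    simp at hax
    subst hax
    exact hx (mem_letters.mpr ha)
  · intro i hi
    rw [List.length_append, List.length_singleton] at hi
    rcases Nat.lt_or_ge i v.length with h | h
    · rw [List.take_append_of_le_length (by omega)]
      exact ((hrep v).mp hv).2 i h
    · have hieq : i = v.length := by omega
      subst hieq
      rw [show v.length + 1 = (v ++ [x]).length from by simp, List.take_length,
        letters_append, letters_single, hr]

end AuxRep

section AuxPoly

variable {A : Type*} {ρ : Set A → ℝ}

lemma dimin (hpm : IsPolymatroid ρ) {U V : Set A} (x : A) (hUV : U ⊆ V) :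
    ρ (V ∪ {x}) + ρ U ≤ ρ V + ρ (U ∪ {x}) := by
  have h := hpm.2.2 (U ∪ {x}) V
  have h1 : (U ∪ {x}) ∪ V = V ∪ {x} := by
    ext a
    simp only [Set.mem_union, Set.mem_singleton_iff]
    constructor
    · rintro ((h | h) | h)
      exacts [Or.inl (hUV h), Or.inr h, Or.inl h]
    · rintro (h | h)
      exacts [Or.inr h, Or.inl (Or.inr h)]
  have h2 : U ⊆ (U ∪ {x}) ∩ V := fun a ha => ⟨Or.inl ha, hUV ha⟩
  have h3 := hpm.2.1 _ _ h2
  rw [h1] at h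
  linarith

lemma subset_spanP (X : Set A) : X ⊆ spanP ρ X := by
  intro y hy
  show ρ (X ∪ {y}) = ρ X
  have : X ∪ {y} = X := by
    ext a
    simp only [Set.mem_union, Set.mem_singleton_iff]
    constructor
    · rintro (h | rfl)
      exacts [h, hy]
    · exact Or.inl
  rw [this]

lemma spanP_mono (hpm : IsPolymatroid ρ) {X Y : Set A} (hXY : X ⊆ Y) :
    spanP ρ X ⊆ spanP ρ Y := by
  intro y hy
  have hy' : ρ (X ∪ {y}) = ρ X := hy
  show ρ (Y ∪ {y}) = ρ Y
  have hd := dimin hpm y hXY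
  have hm := hpm.2.1 Y (Y ∪ {y}) Set.subset_union_left
  exact le_antisymm (by linarith) hm

lemma rho_spanP [Fintype A] (hpm : IsPolymatroid ρ) (X : Set A) :
    ρ (spanP ρ X) = ρ X := by
  classical
  have key : ∀ T : Finset A, ↑T ⊆ spanP ρ X → ρ (X ∪ ↑T) = ρ X := by
    intro T
    induction T using Finset.induction_on with
    | empty => simp
    | insert a T ha ih =>
      intro hsub
      have haS : a ∈ spanP ρ X := hsub (by simp)
      have hTS : ↑T ⊆ spanP ρ X := fun b hb => hsub (by simp [hb])
      have hXa : ρ (X ∪ {a}) = ρ X := haS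
      have hXT := ih hTS
      have hun : X ∪ ↑(insert a T) = (X ∪ ↑T) ∪ {a} := by
        ext b
        simp only [Finset.coe_insert, Set.mem_union, Set.mem_insert_iff,
          Set.mem_singleton_iff, Finset.mem_coe]
        tauto
      have hd := dimin hpm a (Set.subset_union_left : X ⊆ X ∪ ↑T)
      have hmono := hpm.2.1 (X ∪ ↑T) ((X ∪ ↑T) ∪ {a}) Set.subset_union_left
      rw [hun]
      have hle : ρ ((X ∪ ↑T) ∪ {a}) ≤ ρ X := by
        rw [hXa] at hd
        linarith
      rw [hXT] at hmono
      linarith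
  have hfin : (spanP ρ X).Finite := Set.toFinite _
  have hcoe : ↑hfin.toFinset = spanP ρ X := Set.Finite.coe_toFinset _
  have h2 := key hfin.toFinset (by rw [hcoe])
  rw [hcoe] at h2
  rw [Set.union_eq_self_of_subset_left (subset_spanP X)] at h2
  exact h2

lemma spanP_closed [Fintype A] (hpm : IsPolymatroid ρ) (X : Set A) :
    ClosedP ρ (spanP ρ X) := by
  apply Set.Subset.antisymm
  · intro y hy
    have hy' : ρ (spanP ρ X ∪ {y}) = ρ (spanP ρ X) := hy
    show ρ (X ∪ {y}) = ρ X
    have h1 : ρ (X ∪ {y}) ≤ ρ (spanP ρ X ∪ {y}) :=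
      hpm.2.1 _ _ (Set.union_subset_union_left _ (subset_spanP X))
    rw [hy', rho_spanP hpm] at h1
    exact le_antisymm h1 (hpm.2.1 _ _ Set.subset_union_left)
  · exact subset_spanP _

lemma cover_jump [Fintype A] (hpm : IsPolymatroid ρ) {S S' : Set A}
    (hcov : closedCovBy ρ S S') {x : A} (hxS' : x ∈ S') (hxS : x ∉ S) :
    ρ (S ∪ {x}) = ρ S' := by
  obtain ⟨hS, hS', hss, hmax⟩ := hcov
  set D := spanP ρ (S ∪ {x}) with hD
  have hsub1 : S ⊆ D := Set.subset_union_left.trans (subset_spanP _)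
  have hxD : x ∈ D := subset_spanP _ (Or.inr rfl)
  have hSD : S ⊂ D := ssubset_iff_subset_ne.mpr ⟨hsub1, fun hEq => hxS (hEq ▸ hxD)⟩
  have hDS' : D ⊆ S' := by
    have hsub : S ∪ {x} ⊆ S' := Set.union_subset hss.1 (by simpa using hxS')
    calc D ⊆ spanP ρ S' := spanP_mono hpm hsub
    _ = S' := hS'
  have hDeq : D = S' := by
    by_contra hne
    exact hmax D (spanP_closed hpm _) hSD (ssubset_iff_subset_ne.mpr ⟨hDS', hne⟩)
  calc ρ (S ∪ {x}) = ρ D := (rho_spanP hpm _).symm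
  _ = ρ S' := by rw [hDeq]

end AuxPoly

section AuxFlat

variable {A : Type*}

lemma mem_flatOf_iff {G : Greedoid A} {c d : List A} :
    c ∈ G.flatOf d ↔ c ∈ G.lang ∧ G.cont c = G.cont d := Iff.rfl

lemma flatOf_self {G : Greedoid A} {w : List A} (hw : w ∈ G.lang) : w ∈ G.flatOf w :=
  ⟨hw, rfl⟩

lemma flatOf_eq_of_mem {G : Greedoid A} {c d : List A} (h : c ∈ G.flatOf d) :
    G.flatOf c = G.flatOf d := by
  ext e
  rw [mem_flatOf_iff, mem_flatOf_iff, h.2]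

lemma phi_eq {G : Greedoid A} [Fintype A] {ρ : Set A → ℝ} (hpm : IsPolymatroid ρ)
    {φ : Set (List A) → Set A}
    (h1 : ∀ F, G.IsFlat F → ClosedP ρ (φ F))
    (h3 : ∀ α ∈ G.lang, ρ (letters α) = ρ (φ (G.flatOf α)))
    (h4 : ∀ α ∈ G.lang, letters α ⊆ φ (G.flatOf α))
    {w : List A} (hw : w ∈ G.lang) : φ (G.flatOf w) = spanP ρ (letters w) := by
  apply Set.Subset.antisymm
  · intro y hy
    show ρ (letters w ∪ {y}) = ρ (letters w)
    apply le_antisymm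
    · have hsub : letters w ∪ {y} ⊆ φ (G.flatOf w) :=
        Set.union_subset (h4 w hw) (by simpa using hy)
      calc ρ (letters w ∪ {y}) ≤ ρ (φ (G.flatOf w)) := hpm.2.1 _ _ hsub
      _ = ρ (letters w) := (h3 w hw).symm
    · exact hpm.2.1 _ _ Set.subset_union_left
  · have hcl := h1 _ ⟨w, hw, rfl⟩
    calc spanP ρ (letters w) ⊆ spanP ρ (φ (G.flatOf w)) := spanP_mono hpm (h4 w hw)
    _ = φ (G.flatOf w) := hcl

lemma flatLT_extract {G : Greedoid A} {b c : List A}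
    (h : G.flatLT (G.flatOf b) (G.flatOf c)) :
    ∃ b' γ, b' ∈ G.lang ∧ G.cont b' = G.cont b ∧ b' ++ γ ∈ G.lang ∧
      G.cont (b' ++ γ) = G.cont c ∧ γ ≠ [] := by
  obtain ⟨⟨b', hb', γ, hγ1, hγ2⟩, hne⟩ := h
  refine ⟨b', γ, hb'.1, hb'.2, hγ1, hγ2.2, ?_⟩
  rintro rfl
  apply hne
  rw [← flatOf_eq_of_mem hb', flatOf_eq_of_mem (show b' ∈ G.flatOf c from by
    simpa using hγ2)]

lemma rank_eq_of (G : Greedoid A) {X : Set A} {α : List A} (hα : α ∈ G.lang)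
    (hsub : letters α ⊆ X)
    (hub : ∀ β ∈ G.lang, letters β ⊆ X → β.length ≤ α.length) :
    G.rank X = α.length := by
  have hmem : α.length ∈ {n : ℕ | ∃ β ∈ G.lang, letters β ⊆ X ∧ β.length = n} :=
    ⟨α, hα, hsub, rfl⟩
  have hub' : ∀ n ∈ {n : ℕ | ∃ β ∈ G.lang, letters β ⊆ X ∧ β.length = n},
      n ≤ α.length := by
    rintro n ⟨β, hβ, hβs, rfl⟩
    exact hub β hβ hβs
  show sSup {n : ℕ | ∃ β ∈ G.lang, letters β ⊆ X ∧ β.length = n} = α.length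
  exact le_antisymm (csSup_le ⟨α.length, hmem⟩ hub') (le_csSup ⟨α.length, hub'⟩ hmem)

lemma mem_spanR_of (G : Greedoid A) {α : List A} (hα : α ∈ G.lang) {y : A}
    (hy : α ++ [y] ∉ G.lang) : y ∈ G.spanR (letters α) := by
  have hub1 : ∀ β ∈ G.lang, letters β ⊆ letters α → β.length ≤ α.length := by
    intro β hβ hsub
    by_contra hlen
    obtain ⟨z, hz, hαz⟩ := G.exchange β hβ α hα (by omega)
    exact cont_notin G hαz (hsub hz)
  have hub2 : ∀ β ∈ G.lang, letters β ⊆ letters α ∪ {y} → β.length ≤ α.length := by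
    intro β hβ hsub
    by_contra hlen
    obtain ⟨z, hz, hαz⟩ := G.exchange β hβ α hα (by omega)
    rcases hsub hz with h | h
    · exact cont_notin G hαz h
    · simp only [Set.mem_singleton_iff] at h
      subst h
      exact hy hαz
  show G.rank (letters α ∪ {y}) = G.rank (letters α)
  rw [rank_eq_of G hα Set.subset_union_left hub2, rank_eq_of G hα subset_rfl hub1]

lemma mem_kernel_of (G : Greedoid A) {α β : List A} (hα : α ∈ G.lang)
    (hβ : β ∈ G.lang) {x : A} (hx : x ∈ β)
    (havoid : ∀ y ∈ letters β, α ++ [y] ∉ G.lang) : x ∈ G.kernel (letters α) :=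
  ⟨β, hβ, fun y hy => mem_spanR_of G hα (havoid y hy), hx⟩

end AuxFlat

/-- In a normal greedoid with an aligned representation, every letter outside the kernel
of a feasible word has marginal return at least one. -/
theorem notkernel_marginal_ge_one {A : Type*} [Fintype A] (G : Greedoid A)
    (hnorm : G.Normal) (ρ : Set A → ℝ)
    (hpm : IsPolymatroid ρ) (hrep : Represents ρ G) (hal : Aligned G ρ)
    (α : List A) (hα : α ∈ G.lang) :
    ∀ x : A, x ∉ G.kernel (letters α) →
      ρ (letters α) + 1 ≤ ρ (letters α ∪ {x}) := by
  obtain ⟨φ, h1, h2, h3, h4, h5⟩ := hal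
  intro x hx
  have hρα : ρ (letters α) = (α.length : ℝ) := rho_word hpm hrep hα
  -- x is not a loop: a word containing x
  have hnl : ∃ β ∈ G.lang, x ∈ β := by
    have h := hnorm x
    unfold Greedoid.IsLoop at h
    push_neg at h
    exact h
  obtain ⟨β₀, hβ₀, hxβ₀⟩ := hnl
  obtain ⟨u, t, rfl⟩ := List.append_of_mem hxβ₀
  have hux : u ++ [x] ∈ G.lang := G.hereditary (u ++ [x]) t (by simpa using hβ₀)
  -- Case 1 : x is a continuation of α
  by_cases hcx : α ++ [x] ∈ G.lang
  · have h := rho_word hpm hrep hcx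
    rw [letters_append, letters_single] at h
    rw [hρα, h, List.length_append, List.length_singleton]
    push_cast
    linarith
  -- span of α kills no continuation
  have SnC : ∀ y, y ∈ spanP ρ (letters α) → α ++ [y] ∉ G.lang := by
    intro y hyS hyc
    have h := rho_word hpm hrep hyc
    rw [letters_append, letters_single] at h
    have h' : ρ (letters α ∪ {y}) = ρ (letters α) := hyS
    rw [h', hρα, List.length_append, List.length_singleton] at h
    push_cast at h
    linarith
  -- x not in the span of ∅
  have hρux : ρ (letters u ∪ {x}) = (u.length : ℝ) + 1 := by
    have h := rho_word hpm hrep hux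
    rw [letters_append, letters_single] at h
    rw [h, List.length_append, List.length_singleton]
    push_cast
    ring
  have hρu : ρ (letters u) = (u.length : ℝ) :=
    rho_word hpm hrep (G.hereditary u [x] hux)
  have hx1 : (1:ℝ) ≤ ρ {x} := by
    have hd := dimin hpm x (Set.empty_subset (letters u))
    rw [hpm.1, hρux, hρu, show (∅ : Set A) ∪ {x} = {x} from by simp] at hd
    linarith
  have hxsp0 : x ∉ spanP ρ (∅ : Set A) := by
    intro h
    have h' : ρ ((∅ : Set A) ∪ {x}) = ρ (∅ : Set A) := h
    rw [hpm.1, show (∅ : Set A) ∪ {x} = {x} from by simp] at h'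
    linarith
  by_cases hxS : x ∈ spanP ρ (letters α)
  · -- Case 2 : x spanned by α : contradiction with x ∉ κ(α̃)
    exfalso
    set LSet : Set ℕ := {n | ∃ c, c ∈ G.lang ∧ x ∈ spanP ρ (letters c) ∧
      spanP ρ (letters c) ⊆ spanP ρ (letters α) ∧ c.length = n} with hLSet
    have hLne : LSet.Nonempty := ⟨α.length, α, hα, hxS, subset_rfl, rfl⟩
    obtain ⟨c₀, hc₀Λ, hxc₀, hc₀S, hc₀len⟩ := Nat.sInf_mem hLne
    have hc₀ne : G.flatOf [] ≠ G.flatOf c₀ := by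
      intro hEq
      have hmem : c₀ ∈ G.flatOf [] := hEq ▸ flatOf_self hc₀Λ
      have hl := length_eq_of_cont_eq G hc₀Λ (nil_mem G) hmem.2
      simp only [List.length_nil] at hl
      rw [List.length_eq_zero_iff.mp hl, letters_nil] at hxc₀
      exact hxsp0 hxc₀
    set NSet : Set ℕ := {n | ∃ b, b ∈ G.lang ∧ G.flatLT (G.flatOf b) (G.flatOf c₀) ∧
      b.length = n} with hNSet
    have hNne : NSet.Nonempty :=
      ⟨0, [], nil_mem G, ⟨⟨[], ⟨nil_mem G, rfl⟩, c₀, by simpa using hc₀Λ,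
        by simpa using flatOf_self hc₀Λ⟩, hc₀ne⟩, rfl⟩
    have hNbdd : BddAbove NSet := ⟨Fintype.card A, by
      rintro n ⟨b, hbΛ, _, rfl⟩
      exact List.Nodup.length_le_card (G.simple b hbΛ)⟩
    obtain ⟨b₀, hb₀Λ, hb₀lt, hb₀len⟩ := Nat.sSup_mem hNne hNbdd
    obtain ⟨b', γ, hb'Λ, hb'cont, hcΛ, hccont, hγ⟩ := flatLT_extract hb₀lt
    set c := b' ++ γ with hcdef
    have hpb : φ (G.flatOf b₀) = spanP ρ (letters b') := by
      rw [← flatOf_eq_of_mem (⟨hb'Λ, hb'cont⟩ : b' ∈ G.flatOf b₀)]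
      exact phi_eq hpm h1 h3 h4 hb'Λ
    have hpc : φ (G.flatOf c₀) = spanP ρ (letters c) := by
      rw [← flatOf_eq_of_mem (⟨hcΛ, hccont⟩ : c ∈ G.flatOf c₀)]
      exact phi_eq hpm h1 h3 h4 hcΛ
    have hpc0 : spanP ρ (letters c) = spanP ρ (letters c₀) := by
      rw [← hpc]
      exact phi_eq hpm h1 h3 h4 hc₀Λ
    have hlb : b'.length = b₀.length := length_eq_of_cont_eq G hb'Λ hb₀Λ hb'cont
    have hlc : c.length = c₀.length := length_eq_of_cont_eq G hcΛ hc₀Λ hccont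
    have hγpos : 0 < γ.length := List.length_pos_iff.mpr hγ
    have hlbc : b'.length < c.length := by
      rw [hcdef, List.length_append]; omega
    have hcov : G.flatCovBy (G.flatOf b₀) (G.flatOf c₀) := by
      refine ⟨hb₀lt, ?_⟩
      rintro E ⟨a, haΛ, rfl⟩ hlt1 hlt2
      obtain ⟨e', δ, he'Λ, he'cont, heΛ, hecont, hδ⟩ := flatLT_extract hlt1
      have hfe : G.flatOf (e' ++ δ) = G.flatOf a := flatOf_eq_of_mem ⟨heΛ, hecont⟩
      have hmem : (e' ++ δ).length ∈ NSet :=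
        ⟨e' ++ δ, heΛ, by rw [hfe]; exact hlt2, rfl⟩
      have hle := le_csSup hNbdd hmem
      have hl1 : e'.length = b₀.length := length_eq_of_cont_eq G he'Λ hb₀Λ he'cont
      have hpos : 0 < δ.length := List.length_pos_iff.mpr hδ
      rw [List.length_append] at hle
      omega
    have hxb : x ∉ spanP ρ (letters b') := by
      intro hxb
      have hb'S : spanP ρ (letters b') ⊆ spanP ρ (letters α) := by
        have hsub : φ (G.flatOf b₀) ⊆ φ (G.flatOf c₀) :=
          h2 _ _ ⟨b₀, hb₀Λ, rfl⟩ ⟨c₀, hc₀Λ, rfl⟩ hb₀lt.1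
        rw [hpb, hpc, hpc0] at hsub
        exact hsub.trans hc₀S
      have hmem : b'.length ∈ LSet := ⟨b', hb'Λ, hxb, hb'S, rfl⟩
      have hle := Nat.sInf_le hmem
      omega
    have hccov : closedCovBy ρ (spanP ρ (letters b')) (spanP ρ (letters c)) := by
      have h := h5 _ _ ⟨b₀, hb₀Λ, rfl⟩ ⟨c₀, hc₀Λ, rfl⟩ hcov
      rwa [hpb, hpc] at h
    have hxc : x ∈ spanP ρ (letters c) := by rw [hpc0]; exact hxc₀
    by_cases hxlc : x ∈ letters c
    · apply hx
      refine mem_kernel_of G hα hcΛ (mem_letters.mp hxlc) ?_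
      intro y hy
      apply SnC y
      have h : y ∈ spanP ρ (letters c) := subset_spanP _ hy
      rw [hpc0] at h
      exact hc₀S h
    · have hcne : c ≠ [] := by
        intro h
        exact hγ (List.append_eq_nil_iff.mp h).2
      set v := c.dropLast with hvdef
      have hvΛ : v ∈ G.lang := by
        apply G.hereditary v [c.getLast hcne]
        rw [hvdef, List.dropLast_append_getLast hcne]
        exact hcΛ
      have hvlen : v.length = c.length - 1 := List.length_dropLast
      have hjump : ρ (spanP ρ (letters b') ∪ {x}) = ρ (spanP ρ (letters c)) :=
        cover_jump hpm hccov hxc hxb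
      have hρsb : ρ (spanP ρ (letters b')) = (b'.length : ℝ) := by
        rw [rho_spanP hpm, rho_word hpm hrep hb'Λ]
      have hρsc : ρ (spanP ρ (letters c)) = (c.length : ℝ) := by
        rw [rho_spanP hpm, rho_word hpm hrep hcΛ]
      have hsm := hpm.2.2 (letters b' ∪ {x}) (spanP ρ (letters b'))
      have hU : (letters b' ∪ {x}) ∪ spanP ρ (letters b') = spanP ρ (letters b') ∪ {x} := by
        ext a
        simp only [Set.mem_union, Set.mem_singleton_iff]
        constructor
        · rintro ((h | h) | h)
          exacts [Or.inl (subset_spanP _ h), Or.inr h, Or.inl h]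
        · rintro (h | h)
          exacts [Or.inr h, Or.inl (Or.inr h)]
      have hI : letters b' ⊆ (letters b' ∪ {x}) ∩ spanP ρ (letters b') :=
        fun a ha => ⟨Or.inl ha, subset_spanP _ ha⟩
      have hImono := hpm.2.1 _ _ hI
      rw [hU, hjump, hρsc, hρsb] at hsm
      have hwb := rho_word hpm hrep hb'Λ
      have hlow : (c.length : ℝ) ≤ ρ (letters b' ∪ {x}) := by linarith
      have hbv : letters b' ⊆ letters v := by
        rw [hvdef, hcdef, List.dropLast_append_of_ne_nil hγ, letters_append]
        exact Set.subset_union_left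
      have hvc : letters v ⊆ letters c := by
        intro a ha
        exact mem_letters.mpr (List.dropLast_subset c (mem_letters.mp ha))
      have hup : ρ (letters v ∪ {x}) ≤ (c.length : ℝ) := by
        have hmono := hpm.2.1 (letters v ∪ {x}) (letters c ∪ {x})
          (Set.union_subset_union_left _ hvc)
        have hxspc : ρ (letters c ∪ {x}) = ρ (letters c) := hxc
        rw [hxspc, rho_word hpm hrep hcΛ] at hmono
        exact hmono
      have hlowv : (c.length : ℝ) ≤ ρ (letters v ∪ {x}) := by
        have h := hpm.2.1 (letters b' ∪ {x}) (letters v ∪ {x})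
          (Set.union_subset_union_left _ hbv)
        linarith
      have hcpos : 0 < c.length := List.length_pos_iff.mpr hcne
      have hveq : ρ (letters v ∪ {x}) = (v.length : ℝ) + 1 := by
        rw [le_antisymm hup hlowv, hvlen]
        push_cast [Nat.cast_sub (by omega : 1 ≤ c.length)]
        ring
      have hxv : x ∉ letters v := fun h => hxlc (hvc h)
      have hvx : v ++ [x] ∈ G.lang := mem_of_rho hrep hvΛ hxv hveq
      apply hx
      refine mem_kernel_of G hα hvx (by simp) ?_
      intro y hy
      rw [letters_append, letters_single] at hy
      apply SnC y
      rcases hy with h | h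
      · have h' : y ∈ spanP ρ (letters c) := subset_spanP _ (hvc h)
        rw [hpc0] at h'
        exact hc₀S h'
      · simp only [Set.mem_singleton_iff] at h
        subst h
        exact hxS
  · -- Case 3 : x not spanned by α
    obtain ⟨θw, hwΛ, _, hwmax⟩ := max_ext G hα Set.univ (by simp)
    set w := α ++ θw with hwdef
    have hxw : x ∈ spanP ρ (letters w) := by
      obtain ⟨θu, huΛ', _, humax⟩ := max_ext G hux Set.univ (by simp)
      have hcont : G.cont ((u ++ [x]) ++ θu) = G.cont w := by
        ext y
        simp only [Greedoid.cont, Set.mem_setOf_eq]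
        exact ⟨fun h => absurd h (humax y trivial), fun h => absurd h (hwmax y trivial)⟩
      have hfeq : G.flatOf ((u ++ [x]) ++ θu) = G.flatOf w :=
        flatOf_eq_of_mem ⟨huΛ', hcont⟩
      have hxin : x ∈ letters ((u ++ [x]) ++ θu) := by simp [letters]
      have hsub := h4 _ huΛ'
      rw [hfeq, phi_eq hpm h1 h3 h4 hwΛ] at hsub
      exact hsub hxin
    set LSet : Set ℕ := {n | ∃ c, c ∈ G.lang ∧ x ∈ spanP ρ (letters c) ∧
      letters α ⊆ spanP ρ (letters c) ∧ c.length = n} with hLSet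
    have hLne : LSet.Nonempty := ⟨w.length, w, hwΛ, hxw,
      fun a ha => subset_spanP _ (by rw [hwdef, letters_append]; exact Or.inl ha), rfl⟩
    obtain ⟨c₀, hc₀Λ, hxc₀, hαc₀, hc₀len⟩ := Nat.sInf_mem hLne
    set Z := spanP ρ (letters c₀) with hZ
    obtain ⟨θ, hηΛ, hηZ, hηmax⟩ := max_ext G hα Z hαc₀
    set η := α ++ θ with hηdef
    have hc₀Z : letters c₀ ⊆ Z := subset_spanP _
    have hηlen_ge : c₀.length ≤ η.length := by
      by_contra hlt
      obtain ⟨y, hy, hηy⟩ := G.exchange c₀ hc₀Λ η hηΛ (by omega)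
      exact hηmax y (hc₀Z hy) hηy
    have hρZ : ρ Z = (c₀.length : ℝ) := by
      rw [hZ, rho_spanP hpm, rho_word hpm hrep hc₀Λ]
    have hηlen_le : (η.length : ℝ) ≤ (c₀.length : ℝ) := by
      rw [← rho_word hpm hrep hηΛ, ← hρZ]
      exact hpm.2.1 _ _ hηZ
    have hηlen : η.length = c₀.length := by
      have h := Nat.cast_le (α := ℝ).mp hηlen_le
      omega
    have hspη : spanP ρ (letters η) = Z := by
      apply Set.Subset.antisymm
      · calc spanP ρ (letters η) ⊆ spanP ρ Z := spanP_mono hpm hηZ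
        _ = Z := spanP_closed hpm _
      · intro z hz
        show ρ (letters η ∪ {z}) = ρ (letters η)
        apply le_antisymm
        · have hsub : letters η ∪ {z} ⊆ Z := Set.union_subset hηZ (by simpa using hz)
          calc ρ (letters η ∪ {z}) ≤ ρ Z := hpm.2.1 _ _ hsub
          _ = (c₀.length : ℝ) := hρZ
          _ = (η.length : ℝ) := by rw [hηlen]
          _ = ρ (letters η) := (rho_word hpm hrep hηΛ).symm
        · exact hpm.2.1 _ _ Set.subset_union_left
    have hθne : θ ≠ [] := by
      rintro rfl
      apply hxS
      have hηα : η = α := by rw [hηdef, List.append_nil]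
      rw [← hηα, hspη]
      exact hxc₀
    set NSet : Set ℕ := {n | ∃ b, b ∈ G.lang ∧ G.flatLT (G.flatOf b) (G.flatOf η) ∧
      letters α ⊆ spanP ρ (letters b) ∧ b.length = n} with hNSet
    have hNne : NSet.Nonempty := by
      refine ⟨α.length, α, hα,
        ⟨⟨α, flatOf_self hα, θ, hηΛ, flatOf_self hηΛ⟩, ?_⟩, subset_spanP _, rfl⟩
      intro hEq
      have hmem : η ∈ G.flatOf α := hEq ▸ flatOf_self hηΛ
      have hl := length_eq_of_cont_eq G hηΛ hα hmem.2
      rw [hηdef, List.length_append] at hl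
      have hpos : 0 < θ.length := List.length_pos_iff.mpr hθne
      omega
    have hNbdd : BddAbove NSet := ⟨Fintype.card A, by
      rintro n ⟨b, hbΛ, _, _, rfl⟩
      exact List.Nodup.length_le_card (G.simple b hbΛ)⟩
    obtain ⟨b₀, hb₀Λ, hb₀lt, hαb₀, hb₀len⟩ := Nat.sSup_mem hNne hNbdd
    have hcov : G.flatCovBy (G.flatOf b₀) (G.flatOf η) := by
      refine ⟨hb₀lt, ?_⟩
      rintro E ⟨a, haΛ, rfl⟩ hlt1 hlt2
      obtain ⟨e', δ, he'Λ, he'cont, heΛ, hecont, hδ⟩ := flatLT_extract hlt1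
      have hfe : G.flatOf (e' ++ δ) = G.flatOf a := flatOf_eq_of_mem ⟨heΛ, hecont⟩
      have hord : φ (G.flatOf b₀) ⊆ φ (G.flatOf a) :=
        h2 _ _ ⟨b₀, hb₀Λ, rfl⟩ ⟨a, haΛ, rfl⟩ hlt1.1
      have hα_sub : letters α ⊆ spanP ρ (letters (e' ++ δ)) := by
        have e1 : φ (G.flatOf b₀) = spanP ρ (letters b₀) := phi_eq hpm h1 h3 h4 hb₀Λ
        have e2 : φ (G.flatOf a) = spanP ρ (letters (e' ++ δ)) := by
          rw [← hfe]
          exact phi_eq hpm h1 h3 h4 heΛ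
        rw [e1, e2] at hord
        exact hαb₀.trans hord
      have hmem : (e' ++ δ).length ∈ NSet :=
        ⟨e' ++ δ, heΛ, by rw [hfe]; exact hlt2, hα_sub, rfl⟩
      have hle := le_csSup hNbdd hmem
      have hl1 : e'.length = b₀.length := length_eq_of_cont_eq G he'Λ hb₀Λ he'cont
      have hpos : 0 < δ.length := List.length_pos_iff.mpr hδ
      rw [List.length_append] at hle
      omega
    have hxb : x ∉ spanP ρ (letters b₀) := by
      intro hxb
      have hmem : b₀.length ∈ LSet := ⟨b₀, hb₀Λ, hxb, hαb₀, rfl⟩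
      have hle := Nat.sInf_le hmem
      obtain ⟨b', γ, hb'Λ, hb'cont, hcΛ', hccont, hγ⟩ := flatLT_extract hb₀lt
      have hl1 : b'.length = b₀.length := length_eq_of_cont_eq G hb'Λ hb₀Λ hb'cont
      have hl2 : (b' ++ γ).length = η.length := length_eq_of_cont_eq G hcΛ' hηΛ hccont
      rw [List.length_append] at hl2
      have hpos : 0 < γ.length := List.length_pos_iff.mpr hγ
      omega
    have hccov : closedCovBy ρ (spanP ρ (letters b₀)) (spanP ρ (letters η)) := by
      have h := h5 _ _ ⟨b₀, hb₀Λ, rfl⟩ ⟨η, hηΛ, rfl⟩ hcov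
      rwa [phi_eq hpm h1 h3 h4 hb₀Λ, phi_eq hpm h1 h3 h4 hηΛ] at h
    have hxη : x ∈ spanP ρ (letters η) := by rw [hspη]; exact hxc₀
    have hjump : ρ (spanP ρ (letters b₀) ∪ {x}) = ρ (spanP ρ (letters η)) :=
      cover_jump hpm hccov hxη hxb
    have hρsb : ρ (spanP ρ (letters b₀)) = (b₀.length : ℝ) := by
      rw [rho_spanP hpm, rho_word hpm hrep hb₀Λ]
    have hρsh : ρ (spanP ρ (letters η)) = (η.length : ℝ) := by
      rw [rho_spanP hpm, rho_word hpm hrep hηΛ]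
    have hblen : b₀.length + 1 ≤ η.length := by
      obtain ⟨b', γ, hb'Λ, hb'cont, hcΛ', hccont, hγ⟩ := flatLT_extract hb₀lt
      have hl1 : b'.length = b₀.length := length_eq_of_cont_eq G hb'Λ hb₀Λ hb'cont
      have hl2 : (b' ++ γ).length = η.length := length_eq_of_cont_eq G hcΛ' hηΛ hccont
      rw [List.length_append] at hl2
      have hpos : 0 < γ.length := List.length_pos_iff.mpr hγ
      omega
    have hd := dimin hpm x hαb₀
    rw [hjump, hρsh, hρsb, hρα] at hd
    have hcast : (b₀.length : ℝ) + 1 ≤ (η.length : ℝ) := by exact_mod_cast hblen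
    rw [hρα]
    linarith

end PaperPG
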